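/- For every integer n ≥ 4 there exists an n-point metric space M such that no 4-point subspace of M embeds isometrically into the Hilbert space ℓ_2. (Consequently R_2(n) = 3 for n ≥ 3, since every 3-point metric space embeds isometrically into ℓ_2.) -/

import Mathlib

/-!
Take the star metric `d(i, j) = a i + a j` (`i ≠ j`) with weights `a i = 9 ^ i`: the tree metric
of a star whose leaf `i` hangs on an edge of length `a i`. Squared Euclidean distances are of
negative type, `∑ b i * b j * ‖x i - x j‖ ^ 2 ≤ 0` whenever `∑ b i = 0`. For a star metric, writing
`c i = b i * a i`, this becomes `(∑ c i) ^ 2 ≤ 2 * ∑ c i ^ 2`. In a subset of at least four points,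
put `c i = 1` at every point but the one `m` of least weight, and let `c m` restore `∑ c i / a i = 0`;
since `a m` is at most a ninth of every other weight, `|c m| ≤ (#s - 1) / 9` is small and the
inequality fails.
-/

/-- `d` is a metric (distance function) on `α`. -/
def IsMetricDist {α : Type*} (d : α → α → ℝ) : Prop :=
  (∀ x y, d x y = 0 ↔ x = y) ∧ (∀ x y, d x y = d y x) ∧
    (∀ x y z, d x z ≤ d x y + d y z)

open Finset

variable {ι E : Type*} [NormedAddCommGroup E] [InnerProductSpace ℝ E]

def starDist [DecidableEq ι] (a : ι → ℝ) (i j : ι) : ℝ :=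
  if i = j then 0 else a i + a j

theorem isMetricDist_starDist [DecidableEq ι] {a : ι → ℝ} (ha : ∀ i, 0 < a i) :
    IsMetricDist (starDist a) := by
  refine ⟨fun i j => ?_, fun i j => ?_, fun i j k => ?_⟩ <;> unfold starDist
  · split_ifs with hij
    · simp [hij]
    · simp [hij, (add_pos (ha i) (ha j)).ne']
  · by_cases hij : i = j
    · simp [hij]
    · simp [hij, Ne.symm hij, add_comm]
  · have := ha i; have := ha j; have := ha k
    split_ifs <;> subst_vars <;> first | linarith | simp_all

theorem sq_sum_le_two_mul_sum_sq_of_norm_sub_eq_starDist [DecidableEq ι] {s : Finset ι}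
    {a : ι → ℝ} (ha : ∀ i ∈ s, a i ≠ 0) {x : ι → E}
    (hx : ∀ i ∈ s, ∀ j ∈ s, ‖x i - x j‖ = starDist a i j) (c : ι → ℝ)
    (hc : ∑ i ∈ s, c i / a i = 0) :
    (∑ i ∈ s, c i) ^ 2 ≤ 2 * ∑ i ∈ s, c i ^ 2 := by
  have hnonneg := real_inner_self_nonneg (x := ∑ i ∈ s, (c i / a i) • x i)
  rw [inner_sum_smul_sum_smul_of_sum_eq_zero x hc x hc] at hnonneg
  have expand : ∀ i ∈ s, ∀ j ∈ s,
      c i / a i * (c j / a j) * (‖x i - x j‖ * ‖x i - x j‖) =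
        c i * a i * (c j / a j) + c i / a i * (c j * a j) + 2 * (c i * c j) -
          if i = j then 4 * c i ^ 2 else 0 := by
    intro i hi j hj
    rw [hx i hi j hj, starDist]
    split_ifs with hij
    · subst hij
      field_simp [ha i hi]
      ring
    · field_simp [ha i hi, ha j hj]
      ring
  rw [sum_congr rfl fun i hi => sum_congr rfl (expand i hi)] at hnonneg
  simp only [sum_sub_distrib, sum_add_distrib, ← mul_sum, ← sum_mul, hc, sum_ite_eq,
    sum_ite_mem, inter_self, mul_zero, zero_mul, zero_add] at hnonneg
  rw [sq]
  linarith

theorem not_forall_norm_sub_eq_starDist [DecidableEq ι] {s : Finset ι} (hs : 4 ≤ s.card)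
    {a : ι → ℝ} (ha : ∀ i ∈ s, 0 < a i) {m : ι} (hm : m ∈ s)
    (hsep : ∀ i ∈ s, i ≠ m → 9 * a m ≤ a i) (x : ι → E) :
    ¬ ∀ i ∈ s, ∀ j ∈ s, ‖x i - x j‖ = starDist a i j := by
  intro hx
  set t := s.erase m
  set ε := ∑ j ∈ t, a m / a j
  have hk : (3 : ℝ) ≤ t.card := by
    rw [card_erase_of_mem hm]
    exact_mod_cast Nat.le_sub_one_of_lt hs
  have hε_nonneg : 0 ≤ ε :=
    sum_nonneg fun j hj => div_nonneg (ha m hm).le (ha j (mem_of_mem_erase hj)).le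
  have hε_le : ε ≤ t.card * (1 / 9) := by
    rw [← nsmul_eq_mul]
    refine sum_le_card_nsmul _ _ _ fun j hj => ?_
    have haj := ha j (mem_of_mem_erase hj)
    rw [div_le_iff₀ haj]
    linarith [hsep j (mem_of_mem_erase hj) (ne_of_mem_erase hj)]
  set c : ι → ℝ := fun i => if i = m then -ε else 1
  have sum_c : ∀ g : ℝ → ι → ℝ, ∑ i ∈ s, g (c i) i = g (-ε) m + ∑ i ∈ t, g 1 i := by
    intro g
    rw [← add_sum_erase s _ hm]
    refine congrArg₂ _ (by simp [c]) (sum_congr rfl fun i hi => ?_)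
    simp [c, ne_of_mem_erase hi]
  have hc : ∑ i ∈ s, c i / a i = 0 := by
    rw [sum_c fun v i => v / a i, neg_div, sum_div, neg_add_eq_zero]
    exact sum_congr rfl fun j _ => by field_simp [(ha m hm).ne']
  have key := sq_sum_le_two_mul_sum_sq_of_norm_sub_eq_starDist (fun i hi => (ha i hi).ne') hx c hc
  rw [sum_c fun v _ => v, sum_c fun v _ => v ^ 2] at key
  simp only [sum_const, nsmul_one, one_pow] at key
  nlinarith

theorem stmt12 (n : ℕ) :
    ∃ d : Fin n → Fin n → ℝ, IsMetricDist d ∧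
      ∀ S : Finset (Fin n), S.card = 4 →
        ¬ ∃ f : Fin n → lp (fun _ : ℕ => ℝ) 2,
            ∀ x ∈ S, ∀ y ∈ S, ‖f x - f y‖ = d x y := by
  refine ⟨starDist fun i : Fin n => (9 : ℝ) ^ (i : ℕ), isMetricDist_starDist fun _ => by positivity,
    fun S hS ⟨f, hf⟩ => ?_⟩
  have hS_nonempty : S.Nonempty := card_pos.1 (by omega)
  refine not_forall_norm_sub_eq_starDist hS.ge (fun _ _ => by positivity)
    (S.min'_mem hS_nonempty) (fun i hi him => ?_) f hf
  rw [← pow_succ']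
  exact pow_le_pow_right₀ (by norm_num) (lt_of_le_of_ne (S.min'_le i hi) (Ne.symm him))
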